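/- arXiv:1606.02563 — 3 statements merged into one kernel-verified Lean document; each statement's English description precedes it below -/
import Mathlib

section
/- Let v(x) = |x|^α x₁ on ℝⁿ \ {0} with n ≥ 2. Then div(|∇v|^{p-2}∇v) = |∇v|^{p-4} α |x|^{3α-4} x₁ { [α + n + (p-2)(2α+3)] |x|² + (α+2)[α(α+n) + (p-2)(α²+α-1)] x₁² }, where |∇v|² = |x|^{2(α-1)} { α(α+2) x₁² + |x|² }. -/
/-!
Away from the origin, `v y = ‖y‖ ^ α * ⟪e, y⟫` (with `e` the first basis vector) has the explicit
gradient `W y = α ‖y‖ ^ (α - 2) ⟪e, y⟫ y + ‖y‖ ^ α e`. The product and chain rules for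
`y ↦ ‖W y‖ ^ (p - 2) • W y` give
`Δ_p v = ‖W‖ ^ (p - 4) (‖W‖ ^ 2 tr DW + (p - 2) ⟪W, DW W⟫)`, and `DW` is a sum of rank-one maps
and a multiple of the identity, so `tr DW` and `⟪W, DW W⟫` are explicit polynomials in `‖x‖`,
`‖x‖ ^ α` and `x₁`.
-/
open Real
open scoped RealInnerProductSpace

/-- The `p`-Laplacian `div(|∇f|^(p-2) ∇f)` of `f`, computed classically as the trace of the
derivative of the vector field `y ↦ ‖∇f(y)‖^(p-2) • ∇f(y)`. -/
noncomputable def pLaplacian {n : ℕ} (p : ℝ) (f : EuclideanSpace ℝ (Fin n) → ℝ)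
    (x : EuclideanSpace ℝ (Fin n)) : ℝ :=
  LinearMap.trace ℝ (EuclideanSpace ℝ (Fin n))
    ((fderiv ℝ (fun y => ‖gradient f y‖ ^ (p - 2) • gradient f y) x).toLinearMap)

open Filter Topology

section
variable {E F : Type*} [NormedAddCommGroup E] [InnerProductSpace ℝ E]
  [NormedAddCommGroup F] [NormedSpace ℝ F]

theorem HasFDerivAt.norm_rpow {f : F → E} {f' : F →L[ℝ] E} {x : F} (hf : HasFDerivAt f f' x)
    (h0 : f x ≠ 0) (q : ℝ) :
    HasFDerivAt (fun y => ‖f y‖ ^ q) ((q * ‖f x‖ ^ (q - 2)) • (innerSL ℝ (f x)).comp f') x := by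
  -- Write `‖f y‖ ^ q = (‖f y‖ ^ 2) ^ (q / 2)`: the square is smooth, and `f x ≠ 0` keeps
  -- the base of the real power away from 0.
  have hsq : ∀ t : ℝ, 0 ≤ t → ∀ s : ℝ, t ^ s = (t ^ 2) ^ (s / 2) := fun t ht s => by
    rw [← Real.rpow_natCast, ← Real.rpow_mul ht]; ring_nf
  have hpos : ‖f x‖ ^ 2 ≠ 0 := pow_ne_zero 2 (norm_ne_zero_iff.2 h0)
  convert hf.norm_sq.rpow_const (p := q / 2) (Or.inl hpos) using 1
  · simp_rw [hsq _ (norm_nonneg _) q]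
  · rw [hsq _ (norm_nonneg _) (q - 2), show (q - 2) / 2 = q / 2 - 1 by ring]
    ext u
    simp only [smul_apply, ContinuousLinearMap.comp_apply, smul_eq_mul, nsmul_eq_mul]
    ring

theorem HasFDerivAt.norm_rpow_smul {f : F → E} {f' : F →L[ℝ] E} {x : F}
    (hf : HasFDerivAt f f' x) (h0 : f x ≠ 0) (q : ℝ) :
    HasFDerivAt (fun y => ‖f y‖ ^ q • f y)
      (‖f x‖ ^ q • f' + ((q * ‖f x‖ ^ (q - 2)) • (innerSL ℝ (f x)).comp f').smulRight (f x)) x :=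
  (hf.norm_rpow h0 q).smul hf

end

theorem pLaplacian_eq_of_eventuallyEq_gradient {n : ℕ} (p : ℝ) {f : EuclideanSpace ℝ (Fin n) → ℝ}
    {W : EuclideanSpace ℝ (Fin n) → EuclideanSpace ℝ (Fin n)}
    {W' : EuclideanSpace ℝ (Fin n) →L[ℝ] EuclideanSpace ℝ (Fin n)} {x : EuclideanSpace ℝ (Fin n)}
    (hfW : gradient f =ᶠ[𝓝 x] W) (hW : HasFDerivAt W W' x) (h0 : W x ≠ 0) :
    pLaplacian p f x = ‖W x‖ ^ (p - 4)
      * (‖W x‖ ^ 2 * LinearMap.trace ℝ _ W'.toLinearMap + (p - 2) * ⟪W x, W' (W x)⟫) := by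
  have hfield : HasFDerivAt (fun y => ‖gradient f y‖ ^ (p - 2) • gradient f y) _ x :=
    (hW.norm_rpow_smul h0 (p - 2)).congr_of_eventuallyEq (hfW.mono fun y hy => by simp only [hy])
  have hsplit : ‖W x‖ ^ (p - 2) = ‖W x‖ ^ (p - 4) * ‖W x‖ ^ 2 := by
    rw [← Real.rpow_natCast, ← Real.rpow_add (norm_pos_iff.2 h0)]
    ring_nf
  rw [pLaplacian, hfield.fderiv, show p - 2 - 2 = p - 4 by ring, hsplit]
  simp only [ContinuousLinearMap.toLinearMap_add, ContinuousLinearMap.toLinearMap_smul,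
    ContinuousLinearMap.coe_smulRight, map_add, map_smul, smul_eq_mul, LinearMap.trace_smulRight,
    LinearMap.smul_apply, ContinuousLinearMap.coe_coe, ContinuousLinearMap.comp_apply,
    innerSL_apply_apply]
  ring

theorem Real.rpow_mul_natCast_sub_natCast {r : ℝ} (hr : 0 < r) (α : ℝ) (k m : ℕ) {β : ℝ}
    (hβ : β = α * k - m) : r ^ β = (r ^ α) ^ k / r ^ m := by
  rw [hβ, Real.rpow_sub_natCast hr.ne', Real.rpow_mul_natCast hr.le]

section
variable {E : Type*} [NormedAddCommGroup E] [InnerProductSpace ℝ E]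

noncomputable def gradNormRpowMulInner (α : ℝ) (e y : E) : E :=
  (α * ‖y‖ ^ (α - 2) * ⟪e, y⟫) • y + ‖y‖ ^ α • e

noncomputable def fderivGradNormRpowMulInner (α : ℝ) (e x : E) : E →L[ℝ] E :=
  (α * (α - 2) * ‖x‖ ^ (α - 4) * ⟪e, x⟫) • (innerSL ℝ x).smulRight x
    + (α * ‖x‖ ^ (α - 2)) • ((innerSL ℝ e).smulRight x + ⟪e, x⟫ • ContinuousLinearMap.id ℝ E
      + (innerSL ℝ x).smulRight e)

theorem hasGradientAt_norm_rpow_mul_inner [CompleteSpace E] (α : ℝ) (e : E) {x : E}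
    (hx : x ≠ 0) :
    HasGradientAt (fun y => ‖y‖ ^ α * ⟪e, y⟫) (gradNormRpowMulInner α e x) x := by
  rw [hasGradientAt_iff_hasFDerivAt]
  refine (((hasFDerivAt_id x).norm_rpow hx α).mul (innerSL ℝ e).hasFDerivAt).congr_fderiv ?_
  ext u
  simp only [id_eq, ContinuousLinearMap.comp_id, add_apply, smul_apply, smul_eq_mul,
    innerSL_apply_apply, gradNormRpowMulInner, map_add, map_smul,
    InnerProductSpace.toDual_apply_apply]
  ring

theorem hasFDerivAt_gradNormRpowMulInner (α : ℝ) (e : E) {x : E} (hx : x ≠ 0) :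
    HasFDerivAt (gradNormRpowMulInner α e) (fderivGradNormRpowMulInner α e x) x := by
  have hcoef := (((hasFDerivAt_id x).norm_rpow hx (α - 2)).const_mul α).mul
    (innerSL ℝ e).hasFDerivAt
  refine ((hcoef.smul (hasFDerivAt_id x)).add
    (((hasFDerivAt_id x).norm_rpow hx α).smul_const e)).congr_fderiv ?_
  rw [show α - 2 - 2 = α - 4 by ring]
  ext u
  simp only [id_eq, Pi.mul_apply, ContinuousLinearMap.comp_id, add_apply, smul_apply,
    ContinuousLinearMap.id_apply, ContinuousLinearMap.smulRight_apply, smul_eq_mul,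
    innerSL_apply_apply, fderivGradNormRpowMulInner, smul_add]
  module

theorem norm_gradNormRpowMulInner_sq (α : ℝ) {e : E} (he : ‖e‖ = 1) {x : E} (hx : x ≠ 0) :
    ‖gradNormRpowMulInner α e x‖ ^ 2
      = ‖x‖ ^ (2 * (α - 1)) * (α * (α + 2) * ⟪e, x⟫ ^ 2 + ‖x‖ ^ 2) := by
  have hr : 0 < ‖x‖ := norm_pos_iff.2 hx
  have hxx : ⟪x, x⟫ = ‖x‖ ^ 2 := real_inner_self_eq_norm_sq x
  have hee : ⟪e, e⟫ = 1 := by rw [real_inner_self_eq_norm_sq, he, one_pow]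
  rw [← real_inner_self_eq_norm_sq]
  simp only [gradNormRpowMulInner, inner_add_left, inner_add_right, real_inner_smul_left,
    real_inner_smul_right, hxx, hee, real_inner_comm x e]
  rw [Real.rpow_mul_natCast_sub_natCast hr α 1 2 (β := α - 2) (by push_cast; ring),
    Real.rpow_mul_natCast_sub_natCast hr α 2 2 (β := 2 * (α - 1)) (by push_cast; ring)]
  field_simp
  ring

theorem trace_fderivGradNormRpowMulInner [FiniteDimensional ℝ E] (α : ℝ) (e : E) {x : E}
    (hx : x ≠ 0) :
    LinearMap.trace ℝ E (fderivGradNormRpowMulInner α e x).toLinearMap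
      = α * (α + Module.finrank ℝ E) * ‖x‖ ^ (α - 2) * ⟪e, x⟫ := by
  have hr : 0 < ‖x‖ := norm_pos_iff.2 hx
  simp only [fderivGradNormRpowMulInner, ContinuousLinearMap.toLinearMap_add,
    ContinuousLinearMap.toLinearMap_smul, ContinuousLinearMap.coe_smulRight,
    ContinuousLinearMap.coe_id, map_add, map_smul, LinearMap.trace_smulRight, LinearMap.trace_id,
    ContinuousLinearMap.coe_coe, innerSL_apply_apply, real_inner_self_eq_norm_sq,
    real_inner_comm x e, smul_eq_mul]
  rw [Real.rpow_mul_natCast_sub_natCast hr α 1 2 (β := α - 2) (by push_cast; ring),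
    Real.rpow_mul_natCast_sub_natCast hr α 1 4 (β := α - 4) (by push_cast; ring)]
  field_simp
  ring

theorem inner_gradNormRpowMulInner_fderiv (α : ℝ) {e : E} (he : ‖e‖ = 1) {x : E} (hx : x ≠ 0) :
    ⟪gradNormRpowMulInner α e x,
        fderivGradNormRpowMulInner α e x (gradNormRpowMulInner α e x)⟫
      = α * ‖x‖ ^ (3 * α - 4) * ⟪e, x⟫
          * ((2 * α + 3) * ‖x‖ ^ 2 + (α + 2) * (α ^ 2 + α - 1) * ⟪e, x⟫ ^ 2) := by
  have hr : 0 < ‖x‖ := norm_pos_iff.2 hx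
  have hxx : ⟪x, x⟫ = ‖x‖ ^ 2 := real_inner_self_eq_norm_sq x
  have hee : ⟪e, e⟫ = 1 := by rw [real_inner_self_eq_norm_sq, he, one_pow]
  simp only [fderivGradNormRpowMulInner, gradNormRpowMulInner, add_apply,
    smul_apply, ContinuousLinearMap.smulRight_apply,
    ContinuousLinearMap.id_apply, innerSL_apply_apply, inner_add_left, inner_add_right,
    real_inner_smul_left, real_inner_smul_right, hxx, hee, real_inner_comm x e]
  rw [Real.rpow_mul_natCast_sub_natCast hr α 1 2 (β := α - 2) (by push_cast; ring),
    Real.rpow_mul_natCast_sub_natCast hr α 1 4 (β := α - 4) (by push_cast; ring),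
    Real.rpow_mul_natCast_sub_natCast hr α 3 4 (β := 3 * α - 4) (by push_cast; ring)]
  field_simp
  ring

end

theorem pLaplacian_norm_rpow_mul_inner {n : ℕ} (p α : ℝ) {e : EuclideanSpace ℝ (Fin n)}
    (he : ‖e‖ = 1) {x : EuclideanSpace ℝ (Fin n)} (hx : x ≠ 0)
    (h0 : gradNormRpowMulInner α e x ≠ 0) :
    pLaplacian p (fun y => ‖y‖ ^ α * ⟪e, y⟫) x
      = ‖gradNormRpowMulInner α e x‖ ^ (p - 4) * α * ‖x‖ ^ (3 * α - 4) * ⟪e, x⟫ *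
          ((α + n + (p - 2) * (2 * α + 3)) * ‖x‖ ^ 2 +
            (α + 2) * (α * (α + n) + (p - 2) * (α ^ 2 + α - 1)) * ⟪e, x⟫ ^ 2) := by
  have hr : 0 < ‖x‖ := norm_pos_iff.2 hx
  have hgrad : gradient (fun y => ‖y‖ ^ α * ⟪e, y⟫) =ᶠ[𝓝 x] gradNormRpowMulInner α e :=
    (eventually_ne_nhds hx).mono fun y hy => (hasGradientAt_norm_rpow_mul_inner α e hy).gradient
  rw [pLaplacian_eq_of_eventuallyEq_gradient p hgrad (hasFDerivAt_gradNormRpowMulInner α e hx) h0,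
    norm_gradNormRpowMulInner_sq α he hx, trace_fderivGradNormRpowMulInner α e hx,
    inner_gradNormRpowMulInner_fderiv α he hx, finrank_euclideanSpace_fin,
    Real.rpow_mul_natCast_sub_natCast hr α 1 2 (β := α - 2) (by push_cast; ring),
    Real.rpow_mul_natCast_sub_natCast hr α 2 2 (β := 2 * (α - 1)) (by push_cast; ring),
    Real.rpow_mul_natCast_sub_natCast hr α 3 4 (β := 3 * α - 4) (by push_cast; ring)]
  field_simp
  ring

theorem stmt_0 (n : ℕ) (hn : 2 ≤ n) (p α : ℝ)
    (v : EuclideanSpace ℝ (Fin n) → ℝ)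
    (hv : v = fun y => ‖y‖ ^ α * y ⟨0, by omega⟩)
    (x : EuclideanSpace ℝ (Fin n)) (hx : x ≠ 0) (hg : gradient v x ≠ 0) :
    ‖gradient v x‖ ^ 2
        = ‖x‖ ^ (2 * (α - 1)) * (α * (α + 2) * (x ⟨0, by omega⟩) ^ 2 + ‖x‖ ^ 2) ∧
    pLaplacian p v x
      = ‖gradient v x‖ ^ (p - 4) * α * ‖x‖ ^ (3 * α - 4) * x ⟨0, by omega⟩ *
          ((α + n + (p - 2) * (2 * α + 3)) * ‖x‖ ^ 2 +
            (α + 2) * (α * (α + n) + (p - 2) * (α ^ 2 + α - 1)) * (x ⟨0, by omega⟩) ^ 2) := by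
  set e : EuclideanSpace ℝ (Fin n) := EuclideanSpace.single ⟨0, by omega⟩ 1
  have he : ‖e‖ = 1 := by simp [e]
  have hcoord : ∀ y : EuclideanSpace ℝ (Fin n), y ⟨0, by omega⟩ = ⟪e, y⟫ := fun y => by
    simp [e, EuclideanSpace.inner_single_left]
  have hv' : v = fun y => ‖y‖ ^ α * ⟪e, y⟫ := by simp only [hv, hcoord]
  have hgrad : gradient v x = gradNormRpowMulInner α e x := by
    rw [hv']; exact (hasGradientAt_norm_rpow_mul_inner α e hx).gradient
  rw [hgrad] at hg ⊢
  rw [hcoord, norm_gradNormRpowMulInner_sq α he hx, hv',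
    pLaplacian_norm_rpow_mul_inner p α he hx hg]
  exact ⟨rfl, rfl⟩
end

section
/- Let n ≥ 3 and let u be a harmonic function on an open set G ⊆ ℝⁿ \ {0}. Then the Kelvin transform v(x) = |x|^{2-n} u(x/|x|²) is harmonic on the reflected domain G* = { x : x/|x|² ∈ G }. -/
open Real
open scoped RealInnerProductSpace

/-!
Write `ι y = (‖y‖ ^ 2)⁻¹ • y`, `d = dim E`, `Δ = div ∘ ∇` and `v = ‖·‖ ^ (2 - d) * (u ∘ ι)`.
The product rule `Δ (f * g) = f * Δ g + 2 ⟪∇f, ∇g⟫ + g * Δ f` reduces `Δ v` to two computations: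
`Δ ‖·‖ ^ a = a (a + d - 2) ‖·‖ ^ (a - 2)`, which vanishes for `a = 2 - d`, and
`Δ (u ∘ ι) x = ‖x‖⁻⁴ (Δ u (ι x) + (4 - 2d) ⟪x, ∇u (ι x)⟫)`. The cross term
`2 ⟪∇‖·‖ ^ a, ∇(u ∘ ι)⟫ x = -2a ‖x‖ ^ (a - 4) ⟪x, ∇u (ι x)⟫` cancels the first-order term exactly,
so `Δ v x = Δ u (ι x) / ‖x‖ ^ (d + 2)`.
-/

open Filter Topology Module

section Divergence

variable {E : Type*} [NormedAddCommGroup E] [InnerProductSpace ℝ E]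

noncomputable def divergence (F : E → E) (x : E) : ℝ :=
  LinearMap.trace ℝ E (fderiv ℝ F x)

variable {F G : E → E} {x : E}

theorem Filter.EventuallyEq.divergence_eq (h : F =ᶠ[𝓝 x] G) :
    divergence F x = divergence G x := by
  rw [divergence, divergence, h.fderiv_eq]

theorem divergence_id [FiniteDimensional ℝ E] (x : E) :
    divergence (fun y : E => y) x = finrank ℝ E := by
  rw [divergence, fderiv_fun_id]
  exact LinearMap.trace_id ℝ E

theorem divergence_add (hF : DifferentiableAt ℝ F x) (hG : DifferentiableAt ℝ G x) :
    divergence (fun y => F y + G y) x = divergence F x + divergence G x := by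
  rw [divergence, fderiv_fun_add hF hG, ContinuousLinearMap.toLinearMap_add, map_add]; rfl

theorem divergence_sub (hF : DifferentiableAt ℝ F x) (hG : DifferentiableAt ℝ G x) :
    divergence (fun y => F y - G y) x = divergence F x - divergence G x := by
  rw [divergence, fderiv_fun_sub hF hG, ContinuousLinearMap.toLinearMap_sub, map_sub]; rfl

theorem divergence_smul [FiniteDimensional ℝ E] {f : E → ℝ} {f' : E →L[ℝ] ℝ}
    (hf : HasFDerivAt f f' x) (hF : DifferentiableAt ℝ F x) :
    divergence (fun y => f y • F y) x = f' (F x) + f x * divergence F x := by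
  rw [divergence, (hf.fun_smul hF.hasFDerivAt).fderiv, ContinuousLinearMap.toLinearMap_add,
    map_add, ContinuousLinearMap.toLinearMap_smul, map_smul, smul_eq_mul, divergence, add_comm]
  congr 1
  exact LinearMap.trace_smulRight _ _

end Divergence

theorem pLaplacian_two {n : ℕ} (f : EuclideanSpace ℝ (Fin n) → ℝ) :
    pLaplacian 2 f = divergence (gradient f) := by
  ext x
  simp only [pLaplacian, sub_self, rpow_zero, one_smul]
  rfl

section Gradient

variable {E : Type*} [NormedAddCommGroup E] [InnerProductSpace ℝ E]

theorem HasGradientAt.mul [CompleteSpace E] {f g : E → ℝ} {a b x : E} (hf : HasGradientAt f a x)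
    (hg : HasGradientAt g b x) : HasGradientAt (fun y => f y * g y) (f x • b + g x • a) x := by
  rw [hasGradientAt_iff_hasFDerivAt, map_add, map_smul, map_smul]
  exact hf.hasFDerivAt.fun_mul hg.hasFDerivAt

theorem ContDiffAt.differentiableAt_gradient [CompleteSpace E] {u : E → ℝ} {x : E}
    (hu : ContDiffAt ℝ 2 u x) :
    DifferentiableAt ℝ (gradient u) x :=
  (InnerProductSpace.toDual ℝ E).symm.toContinuousLinearEquiv.differentiableAt.comp x
    ((hu.fderiv_right (m := 1) (by norm_num)).differentiableAt (by norm_num))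

theorem divergence_gradient_mul [FiniteDimensional ℝ E] {f g : E → ℝ} {F G : E → E} {x : E}
    (hf : ∀ᶠ y in 𝓝 x, HasGradientAt f (F y) y) (hg : ∀ᶠ y in 𝓝 x, HasGradientAt g (G y) y)
    (hF : DifferentiableAt ℝ F x) (hG : DifferentiableAt ℝ G x) :
    divergence (gradient fun y => f y * g y) x
      = f x * divergence G x + 2 * ⟪F x, G x⟫ + g x * divergence F x := by
  have hgrad : gradient (fun y => f y * g y) =ᶠ[𝓝 x] fun y => f y • G y + g y • F y :=
    (hf.and hg).mono fun y hy => (hy.1.mul hy.2).gradient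
  have hfx := hf.self_of_nhds.hasFDerivAt
  have hgx := hg.self_of_nhds.hasFDerivAt
  rw [hgrad.divergence_eq, divergence_add (hfx.differentiableAt.fun_smul hG)
    (hgx.differentiableAt.fun_smul hF), divergence_smul hfx hG, divergence_smul hgx hF]
  simp only [InnerProductSpace.toDual_apply_apply, real_inner_comm (G x)]
  ring

theorem hasFDerivAt_norm_rpow_of_ne_zero {x : E} (hx : x ≠ 0) (p : ℝ) :
    HasFDerivAt (fun y : E => ‖y‖ ^ p) ((p * ‖x‖ ^ (p - 2)) • innerSL ℝ x) x := by
  have hsq (y : E) (q : ℝ) : (‖y‖ ^ 2) ^ q = ‖y‖ ^ (2 * q) := by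
    rw [← rpow_natCast, ← rpow_mul (norm_nonneg y)]
    norm_num
  have h := (hasStrictFDerivAt_norm_sq x).hasFDerivAt.rpow_const (p := p / 2)
    (Or.inl (by positivity))
  simp only [hsq] at h
  convert h using 1
  · ext y; ring_nf
  · rw [← Nat.cast_smul_eq_nsmul ℝ, smul_smul]
    ring_nf

theorem hasGradientAt_norm_rpow_of_ne_zero [CompleteSpace E] {x : E} (hx : x ≠ 0) (p : ℝ) :
    HasGradientAt (fun y : E => ‖y‖ ^ p) ((p * ‖x‖ ^ (p - 2)) • x) x := by
  rw [hasGradientAt_iff_hasFDerivAt, map_smul]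
  exact hasFDerivAt_norm_rpow_of_ne_zero hx p

theorem divergence_radial [FiniteDimensional ℝ E] {x : E} (hx : x ≠ 0) (p : ℝ) :
    divergence (fun y : E => (p * ‖y‖ ^ (p - 2)) • y) x
      = p * (p + finrank ℝ E - 2) * ‖x‖ ^ (p - 2) := by
  have hr : 0 < ‖x‖ := norm_pos_iff.2 hx
  rw [divergence_smul ((hasFDerivAt_norm_rpow_of_ne_zero hx (p - 2)).const_mul p)
    differentiableAt_fun_id, divergence_id]
  simp only [smul_apply, innerSL_apply_apply, real_inner_self_eq_norm_sq,
    smul_eq_mul, rpow_sub hr, rpow_two]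
  field_simp
  ring

end Gradient

section Inversion

variable {E : Type*} [NormedAddCommGroup E] [InnerProductSpace ℝ E]

theorem LinearMap.trace_comp_smul_id_add_smulRight [FiniteDimensional ℝ E] (A : E →L[ℝ] E)
    (c : ℝ) (ℓ : E →L[ℝ] ℝ) (v : E) :
    LinearMap.trace ℝ E (A ∘L (c • ContinuousLinearMap.id ℝ E + ℓ.smulRight v))
      = c * LinearMap.trace ℝ E A + ℓ (A v) := by
  have h : A ∘L (c • ContinuousLinearMap.id ℝ E + ℓ.smulRight v) = c • A + ℓ.smulRight (A v) := by
    ext; simp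
  rw [h, ContinuousLinearMap.toLinearMap_add, map_add, ContinuousLinearMap.toLinearMap_smul,
    map_smul, smul_eq_mul]
  congr 1
  exact LinearMap.trace_smulRight _ _

theorem hasFDerivAt_inv_norm_sq {x : E} (hx : x ≠ 0) :
    HasFDerivAt (fun y : E => (‖y‖ ^ 2)⁻¹) ((-2 * ((‖x‖ ^ 2)⁻¹) ^ 2) • innerSL ℝ x) x := by
  have hq : ‖x‖ ^ 2 ≠ 0 := by positivity
  refine ((hasDerivAt_inv hq).comp_hasFDerivAt x (hasStrictFDerivAt_norm_sq x).hasFDerivAt)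
    |>.congr_fderiv ?_
  rw [← Nat.cast_smul_eq_nsmul ℝ, smul_smul]
  congr 1
  field_simp
  norm_num

theorem hasFDerivAt_inversion {x : E} (hx : x ≠ 0) :
    HasFDerivAt (fun y : E => (‖y‖ ^ 2)⁻¹ • y) ((‖x‖ ^ 2)⁻¹ • ContinuousLinearMap.id ℝ E
      + ((-2 * ((‖x‖ ^ 2)⁻¹) ^ 2) • innerSL ℝ x).smulRight x) x :=
  (hasFDerivAt_inv_norm_sq hx).fun_smul (hasFDerivAt_id x)

/-- `∇(u ∘ ι) = inversionPullback (∇u)`: the transpose of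
`Dι y = ‖y‖⁻² (1 - 2 ‖y‖⁻² y yᵀ)` applied to `V (ι y)`. -/
noncomputable def inversionPullback (V : E → E) (y : E) : E :=
  (‖y‖ ^ 2)⁻¹ • V ((‖y‖ ^ 2)⁻¹ • y) - (2 * ((‖y‖ ^ 2)⁻¹) ^ 2 * ⟪y, V ((‖y‖ ^ 2)⁻¹ • y)⟫) • y

theorem HasGradientAt.comp_inversion [CompleteSpace E] {u : E → ℝ} {V : E → E} {y : E}
    (hy : y ≠ 0) (hu : HasGradientAt u (V ((‖y‖ ^ 2)⁻¹ • y)) ((‖y‖ ^ 2)⁻¹ • y)) :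
    HasGradientAt (fun z => u ((‖z‖ ^ 2)⁻¹ • z)) (inversionPullback V y) y := by
  rw [hasGradientAt_iff_hasFDerivAt]
  refine (hu.hasFDerivAt.comp (f := fun z : E => (‖z‖ ^ 2)⁻¹ • z) y
    (hasFDerivAt_inversion hy)).congr_fderiv ?_
  ext h
  simp only [inversionPullback, ContinuousLinearMap.comp_add, ContinuousLinearMap.comp_smul,
    ContinuousLinearMap.comp_id, ContinuousLinearMap.comp_apply, add_apply, sub_apply, smul_apply,
    ContinuousLinearMap.smulRight_apply, InnerProductSpace.toDual_apply_apply, coe_innerSL_apply,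
    map_sub, map_smul, real_inner_comm y, smul_eq_mul]
  ring

theorem HasFDerivAt.comp_inversion {V : E → E} {A : E →L[ℝ] E} {x : E} (hx : x ≠ 0)
    (hV : HasFDerivAt V A ((‖x‖ ^ 2)⁻¹ • x)) :
    HasFDerivAt (fun y => V ((‖y‖ ^ 2)⁻¹ • y)) (A ∘L ((‖x‖ ^ 2)⁻¹ • ContinuousLinearMap.id ℝ E
        + ((-2 * ((‖x‖ ^ 2)⁻¹) ^ 2) • innerSL ℝ x).smulRight x)) x :=
  hV.comp (f := fun y : E => (‖y‖ ^ 2)⁻¹ • y) x (hasFDerivAt_inversion hx)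

theorem DifferentiableAt.inversionPullback {V : E → E} {x : E} (hx : x ≠ 0)
    (hV : DifferentiableAt ℝ V ((‖x‖ ^ 2)⁻¹ • x)) :
    DifferentiableAt ℝ (inversionPullback V) x := by
  have hs := (hasFDerivAt_inv_norm_sq hx).differentiableAt
  have hW := (hV.hasFDerivAt.comp_inversion hx).differentiableAt
  exact (hs.fun_smul hW).fun_sub
    (((hs.pow 2).const_mul 2).mul (differentiableAt_fun_id.inner ℝ hW) |>.fun_smul
      differentiableAt_fun_id)

theorem divergence_inversionPullback [FiniteDimensional ℝ E] {V : E → E} {x : E} (hx : x ≠ 0)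
    (hV : DifferentiableAt ℝ V ((‖x‖ ^ 2)⁻¹ • x)) :
    divergence (inversionPullback V) x
      = ((‖x‖ ^ 2)⁻¹) ^ 2 * (divergence V ((‖x‖ ^ 2)⁻¹ • x)
          + (4 - 2 * finrank ℝ E) * ⟪x, V ((‖x‖ ^ 2)⁻¹ • x)⟫) := by
  have hs := hasFDerivAt_inv_norm_sq hx
  have hW := hV.hasFDerivAt.comp_inversion hx
  have ht : HasFDerivAt (fun y => 2 * ((‖y‖ ^ 2)⁻¹) ^ 2 * ⟪y, V ((‖y‖ ^ 2)⁻¹ • y)⟫) _ x :=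
    (hs.pow 2 |>.const_mul 2).mul ((hasFDerivAt_id x).inner ℝ hW)
  unfold inversionPullback
  rw [divergence_sub (hs.differentiableAt.fun_smul hW.differentiableAt)
      (ht.differentiableAt.fun_smul differentiableAt_fun_id),
    divergence_smul hs hW.differentiableAt, divergence_smul ht differentiableAt_fun_id,
    divergence_id, divergence, hW.fderiv, LinearMap.trace_comp_smul_id_add_smulRight]
  have hq : ‖x‖ ^ 2 ≠ 0 := by positivity
  simp only [divergence, ContinuousLinearMap.comp_add, ContinuousLinearMap.comp_smul,
    ContinuousLinearMap.comp_id, add_apply, smul_apply, coe_innerSL_apply,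
    ContinuousLinearMap.comp_apply, ContinuousLinearMap.prod_apply, ContinuousLinearMap.id_apply,
    ContinuousLinearMap.smulRight_apply, fderivInnerCLM_apply, map_smul, id_eq, inner_add_right,
    real_inner_smul_right, real_inner_self_eq_norm_sq, smul_eq_mul, nsmul_eq_mul, Nat.cast_ofNat,
    Nat.add_one_sub_one, pow_one, inv_pow]
  field_simp
  ring

end Inversion

theorem divergence_gradient_kelvin {E : Type*} [NormedAddCommGroup E] [InnerProductSpace ℝ E]
    [FiniteDimensional ℝ E] {u : E → ℝ} {x : E} (hx : x ≠ 0)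
    (hu : ∀ᶠ y in 𝓝 x, DifferentiableAt ℝ u ((‖y‖ ^ 2)⁻¹ • y))
    (hu' : DifferentiableAt ℝ (gradient u) ((‖x‖ ^ 2)⁻¹ • x)) :
    divergence (gradient fun y => ‖y‖ ^ ((2 : ℝ) - finrank ℝ E) * u ((‖y‖ ^ 2)⁻¹ • y)) x
      = divergence (gradient u) ((‖x‖ ^ 2)⁻¹ • x) / ‖x‖ ^ (finrank ℝ E + 2) := by
  set a : ℝ := 2 - finrank ℝ E with ha
  have hne : ∀ᶠ y in 𝓝 x, y ≠ 0 := eventually_ne_nhds hx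
  have hradial : DifferentiableAt ℝ (fun y : E => (a * ‖y‖ ^ (a - 2)) • y) x :=
    ((hasFDerivAt_norm_rpow_of_ne_zero hx _).differentiableAt.const_mul a).fun_smul
      differentiableAt_fun_id
  rw [divergence_gradient_mul (hne.mono fun y hy => hasGradientAt_norm_rpow_of_ne_zero hy a)
      ((hne.and hu).mono fun y hy => hy.2.hasGradientAt.comp_inversion hy.1)
      hradial (hu'.inversionPullback hx),
    divergence_radial hx, divergence_inversionPullback hx hu']
  have hr : 0 < ‖x‖ := norm_pos_iff.2 hx
  simp only [ha, rpow_sub hr, rpow_ofNat, rpow_natCast, inv_pow, sub_sub_cancel_left,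
    rpow_neg_natCast, zpow_neg, zpow_natCast, inversionPullback, inner_sub_right,
    real_inner_smul_left, real_inner_smul_right, real_inner_self_eq_norm_sq, sub_add_cancel,
    sub_self, mul_zero, zero_mul, add_zero]
  field_simp
  ring

theorem stmt_5_general (n : ℕ) (G : Set (EuclideanSpace ℝ (Fin n)))
    (hG : IsOpen G)
    (u : EuclideanSpace ℝ (Fin n) → ℝ)
    (hu : ContDiffOn ℝ 2 u G)
    (huh : ∀ x ∈ G, pLaplacian 2 u x = 0)
    (v : EuclideanSpace ℝ (Fin n) → ℝ)
    (hv : v = fun y => ‖y‖ ^ ((2 : ℝ) - n) * u ((‖y‖ ^ 2)⁻¹ • y))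
    (x : EuclideanSpace ℝ (Fin n)) (hx : x ≠ 0) (hxG : (‖x‖ ^ 2)⁻¹ • x ∈ G) :
    pLaplacian 2 v x = 0 := by
  have hinv : ContinuousAt (fun y : EuclideanSpace ℝ (Fin n) => (‖y‖ ^ 2)⁻¹ • y) x :=
    (hasFDerivAt_inversion hx).continuousAt
  have hu2 : ∀ z ∈ G, ContDiffAt ℝ 2 u z := fun z hz => hu.contDiffAt (hG.mem_nhds hz)
  have hdiff : ∀ᶠ y in 𝓝 x, DifferentiableAt ℝ u ((‖y‖ ^ 2)⁻¹ • y) :=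
    (hinv.eventually_mem (hG.mem_nhds hxG)).mono fun y hy =>
      (hu2 _ hy).differentiableAt (by norm_num)
  have hgrad : DifferentiableAt ℝ (gradient u) ((‖x‖ ^ 2)⁻¹ • x) :=
    (hu2 _ hxG).differentiableAt_gradient
  have hdim : (n : ℝ) = finrank ℝ (EuclideanSpace ℝ (Fin n)) := by simp
  rw [hv, hdim, pLaplacian_two, divergence_gradient_kelvin hx hdiff hgrad, ← pLaplacian_two,
    huh _ hxG, zero_div]

theorem stmt_5 (n : ℕ) (hn : 3 ≤ n) (G : Set (EuclideanSpace ℝ (Fin n)))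
    (hG : IsOpen G) (hG0 : (0 : EuclideanSpace ℝ (Fin n)) ∉ G)
    (u : EuclideanSpace ℝ (Fin n) → ℝ)
    (hu : ContDiffOn ℝ 2 u G)
    (huh : ∀ x ∈ G, pLaplacian 2 u x = 0)
    (v : EuclideanSpace ℝ (Fin n) → ℝ)
    (hv : v = fun y => ‖y‖ ^ ((2 : ℝ) - n) * u ((‖y‖ ^ 2)⁻¹ • y))
    (x : EuclideanSpace ℝ (Fin n)) (hx : x ≠ 0) (hxG : (‖x‖ ^ 2)⁻¹ • x ∈ G) :
    pLaplacian 2 v x = 0 :=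
  stmt_5_general n G hG u hu huh v hv x hx hxG
end

section
/- Let n ≥ 2 and let α, p be real numbers satisfying the system α + n + (p-2)(2α+3) = 0 and (α+2)[α(α+n) + (p-2)(α²+α-1)] = 0 with α ≠ 0. Then (α,p) ∈ { (-2, n), (-n, 2), (-1, 3-n) }. -/
theorem stmt_12 (n : ℕ) (hn : 2 ≤ n) (α p : ℝ)
    (h1 : α + n + (p - 2) * (2 * α + 3) = 0)
    (h2 : (α + 2) * (α * (α + n) + (p - 2) * (α ^ 2 + α - 1)) = 0)
    (hα : α ≠ 0) :
    (α = -2 ∧ p = n) ∨ (α = -n ∧ p = 2) ∨ (α = -1 ∧ p = 3 - n) := by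
  have hn2 : (2:ℝ) ≤ n := by exact_mod_cast hn
  have hn3 : 2 * α + 3 ≠ 0 := by
    intro h
    have hα2 : α = -3/2 := by linarith
    rw [hα2] at h1
    nlinarith
  rcases mul_eq_zero.1 h2 with h | h
  · have hα2 : α = -2 := by linarith
    subst hα2
    left
    constructor
    · rfl
    · nlinarith
  · have key : (α + n) * (α + 1) ^ 2 = 0 := by
      linear_combination (2*α+3) * h - (α^2+α-1) * h1
    rcases mul_eq_zero.1 key with h3 | h3
    · right; left
      have hα2 : α = -n := by linarith
      subst hα2
      constructor
      · rfl
      · have : (p - 2) * (2 * (-(n:ℝ)) + 3) = 0 := by linarith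
        rcases mul_eq_zero.1 this with h4 | h4
        · linarith
        · exact absurd h4 hn3
    · right; right
      have hα2 : α = -1 := by
        have := pow_eq_zero_iff (n := 2) (by norm_num) |>.1 h3
        linarith
      subst hα2
      exact ⟨rfl, by linarith⟩
end
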